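/- Let ℓ: [0,1] × {0,1} → [−1,1] be a loss of bounded variation (ℓ ∈ L_BV). If a randomized predictor ((Ω,π), p) is randomized (G,H,ε)-multiaccurate, then for every h ∈ H and every group g ∈ G: |E_{ω~π,(x,y)~D}[(y − p(ω,x))·Δℓ(h(x)) | g(x)=1]| ≤ 10ε·√(1/P_g). -/
import Mathlib


open MeasureTheory ProbabilityTheory Set

noncomputable section

/-- Real value of a Boolean label. -/
def lab (y : Bool) : ℝ := if y then 1 else 0

/-- Conditional expectation of `f` under `D`, given that the group membership
function `g` evaluates to `true` on the context. -/
def condE {X : Type*} [MeasurableSpace X] (D : Measure (X × Bool)) (g : X → Bool)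
    (f : X × Bool → ℝ) : ℝ :=
  ∫ z, f z ∂(D[|{z : X × Bool | g z.1 = true}])

/-- Probability of group `g` under `D`. -/
def Pg {X : Type*} [MeasurableSpace X] (D : Measure (X × Bool)) (g : X → Bool) : ℝ :=
  (D {z : X × Bool | g z.1 = true}).toReal

/-- The set of all partition sums `∑ |f(z_{j+1}) - f(z_j)|` over finite partitions
`0 = z_0 < z_1 < ⋯ < z_m = 1` of `[0,1]`.  `V(f) ≤ C` iff every element is `≤ C`. -/
def partitionSums (f : ℝ → ℝ) : Set ℝ :=
  {S | ∃ (m : ℕ) (z : ℕ → ℝ), z 0 = 0 ∧ z m = 1 ∧ (∀ i < m, z i < z (i + 1)) ∧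
      S = ∑ i ∈ Finset.range m, |f (z (i + 1)) - f (z i)|}

/-- Joint conditional expectation for a randomized predictor: `F` is averaged over
`ω ~ π` drawn independently of `(x, y) ~ D`, conditioned on `g x = true`. -/
def condER {Ω X : Type*} [MeasurableSpace Ω] [MeasurableSpace X]
    (π : Measure Ω) (D : Measure (X × Bool)) (g : X → Bool)
    (F : Ω × (X × Bool) → ℝ) : ℝ :=
  ∫ u, F u ∂((π.prod D)[|{u : Ω × (X × Bool) | g u.2.1 = true}])

open Filter

namespace Stmt12Aux

lemma chain_le {m : ℕ} {z : ℕ → ℝ} (hz : ∀ i < m, z i < z (i + 1)) :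
    ∀ {i j : ℕ}, i ≤ j → j ≤ m → z i ≤ z j := by
  intro i j hij hjm
  induction j with
  | zero => interval_cases i; exact le_rfl
  | succ n ih =>
    rcases Nat.lt_or_ge i (n + 1) with hc | hc
    · exact le_trans (ih (by omega) (by omega)) (le_of_lt (hz n (by omega)))
    · have : i = n + 1 := by omega
      subst this; exact le_rfl

def posSums (f : ℝ → ℝ) (q : ℝ) : Set ℝ :=
  {S | ∃ (m : ℕ) (z : ℕ → ℝ), z 0 = 0 ∧ z m = q ∧ (∀ i < m, z i < z (i + 1)) ∧
      S = ∑ i ∈ Finset.range m, max (f (z (i + 1)) - f (z i)) 0}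

def posVar (f : ℝ → ℝ) (q : ℝ) : ℝ := sSup (posSums f q)

lemma nonempty_posSums (f : ℝ → ℝ) {q : ℝ} (hq : 0 ≤ q) : (posSums f q).Nonempty := by
  rcases eq_or_lt_of_le hq with h | h
  · exact ⟨0, 0, fun _ => 0, rfl, h, fun i hi => absurd hi (Nat.not_lt_zero i), by simp⟩
  · refine ⟨max (f q - f 0) 0, 1, fun i => if i = 0 then 0 else q, by simp, by simp, ?_, by simp⟩
    intro i hi
    interval_cases i
    simpa using h

lemma posSums_le {f : ℝ → ℝ} (hV : ∀ S ∈ partitionSums f, S ≤ 1)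
    {q : ℝ} (hq : q ∈ Icc (0:ℝ) 1) {S : ℝ} (hS : S ∈ posSums f q) :
    S ≤ (1 + (f q - f 0)) / 2 := by
  obtain ⟨m, z, hz0, hzm, hinc, rfl⟩ := hS
  have habs : ∑ i ∈ Finset.range m, |f (z (i + 1)) - f (z i)| ≤ 1 := by
    rcases eq_or_lt_of_le hq.2 with h1 | h1
    · exact hV _ ⟨m, z, hz0, by rw [hzm, h1], hinc, rfl⟩
    · set z' : ℕ → ℝ := fun i => if i = m + 1 then 1 else z i with hz'
      have e0 : z' 0 = 0 := by
        simp only [hz']; rw [if_neg (show ¬ (0:ℕ) = m + 1 by omega)]; exact hz0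
      have etop : z' (m + 1) = 1 := by simp [hz']
      have einner : ∀ i, i ≤ m → z' i = z i := by
        intro i hi; simp only [hz']; rw [if_neg (show ¬ i = m + 1 by omega)]
      have hmem : (∑ i ∈ Finset.range (m+1), |f (z' (i + 1)) - f (z' i)|) ∈ partitionSums f := by
        refine ⟨m + 1, z', e0, etop, ?_, rfl⟩
        intro i hi
        rcases Nat.lt_or_ge i m with hc | hc
        · rw [einner i (by omega), einner (i+1) (by omega)]; exact hinc i hc
        · have : i = m := by omega
          subst this
          rw [einner _ le_rfl, etop, hzm]; exact h1
      have hle := hV _ hmem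
      have hsplit : ∑ i ∈ Finset.range (m+1), |f (z' (i + 1)) - f (z' i)| =
          (∑ i ∈ Finset.range m, |f (z (i + 1)) - f (z i)|) + |f (z' (m+1)) - f (z' m)| := by
        rw [Finset.sum_range_succ]
        congr 1
        refine Finset.sum_congr rfl fun i hi => ?_
        rw [Finset.mem_range] at hi
        rw [einner i (by omega), einner (i+1) (by omega)]
      have := abs_nonneg (f (z' (m+1)) - f (z' m))
      linarith [hsplit ▸ hle]
  have hsum : ∑ i ∈ Finset.range m, (f (z (i + 1)) - f (z i)) = f q - f 0 := by
    rw [Finset.sum_range_sub (fun i => f (z i)) m, hzm, hz0]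
  have hmax : ∀ a : ℝ, max a 0 = (|a| + a) / 2 := by
    intro a
    rcases le_or_gt 0 a with h | h
    · rw [max_eq_left h, abs_of_nonneg h]; ring
    · rw [max_eq_right h.le, abs_of_neg h]; ring
  calc ∑ i ∈ Finset.range m, max (f (z (i + 1)) - f (z i)) 0
      = ∑ i ∈ Finset.range m, (|f (z (i + 1)) - f (z i)| + (f (z (i + 1)) - f (z i))) / 2 :=
        Finset.sum_congr rfl fun i _ => hmax _
    _ = (∑ i ∈ Finset.range m, (|f (z (i + 1)) - f (z i)| + (f (z (i + 1)) - f (z i)))) / 2 := by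
        rw [Finset.sum_div]
    _ ≤ (1 + (f q - f 0)) / 2 := by
        rw [Finset.sum_add_distrib, hsum]
        linarith

lemma bddAbove_posSums {f : ℝ → ℝ} (hV : ∀ S ∈ partitionSums f, S ≤ 1)
    {q : ℝ} (hq : q ∈ Icc (0:ℝ) 1) : BddAbove (posSums f q) :=
  ⟨(1 + (f q - f 0)) / 2, fun _ hS => posSums_le hV hq hS⟩

lemma posVar_zero (f : ℝ → ℝ) : posVar f 0 = 0 := by
  have : posSums f 0 = {0} := by
    ext S
    constructor
    · rintro ⟨m, z, hz0, hzm, hinc, rfl⟩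
      rcases Nat.eq_zero_or_pos m with hm | hm
      · subst hm; simp
      · exfalso
        have h1 : z 0 < z 1 := hinc 0 hm
        have h2 : z 1 ≤ z m := chain_le hinc hm le_rfl
        rw [hz0] at h1; rw [hzm] at h2; linarith
    · rintro rfl
      exact ⟨0, fun _ => 0, rfl, rfl, fun i hi => absurd hi (Nat.not_lt_zero i), by simp⟩
  rw [posVar, this, csSup_singleton]

lemma posVar_le {f : ℝ → ℝ} (hV : ∀ S ∈ partitionSums f, S ≤ 1)
    {q : ℝ} (hq : q ∈ Icc (0:ℝ) 1) : posVar f q ≤ (1 + (f q - f 0)) / 2 :=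
  csSup_le (nonempty_posSums f hq.1) (fun _ hS => posSums_le hV hq hS)

lemma posVar_step {f : ℝ → ℝ} (hV : ∀ S ∈ partitionSums f, S ≤ 1)
    {a b : ℝ} (ha : 0 ≤ a) (hab : a < b) (hb : b ≤ 1) :
    posVar f a + max (f b - f a) 0 ≤ posVar f b := by
  have hbddb : BddAbove (posSums f b) := bddAbove_posSums hV ⟨by linarith, hb⟩
  have key : ∀ S ∈ posSums f a, S + max (f b - f a) 0 ∈ posSums f b := by
    rintro S ⟨m, z, hz0, hzm, hinc, rfl⟩
    set z' : ℕ → ℝ := fun i => if i = m + 1 then b else z i with hz'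
    have e0 : z' 0 = 0 := by
      simp only [hz']; rw [if_neg (show ¬ (0:ℕ) = m + 1 by omega)]; exact hz0
    have etop : z' (m + 1) = b := by simp [hz']
    have einner : ∀ i, i ≤ m → z' i = z i := by
      intro i hi; simp only [hz']; rw [if_neg (show ¬ i = m + 1 by omega)]
    refine ⟨m + 1, z', e0, etop, ?_, ?_⟩
    · intro i hi
      rcases Nat.lt_or_ge i m with hc | hc
      · rw [einner i (by omega), einner (i+1) (by omega)]; exact hinc i hc
      · have : i = m := by omega
        subst this
        rw [einner _ le_rfl, etop, hzm]; exact hab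
    · rw [Finset.sum_range_succ]
      congr 1
      · refine Finset.sum_congr rfl fun i hi => ?_
        rw [Finset.mem_range] at hi
        rw [einner i (by omega), einner (i+1) (by omega)]
      · rw [einner m le_rfl, etop, hzm]
  have hstep : ∀ S ∈ posSums f a, S ≤ sSup (posSums f b) - max (f b - f a) 0 := by
    intro S hS
    have := le_csSup hbddb (key S hS)
    linarith
  have h2 : sSup (posSums f a) ≤ sSup (posSums f b) - max (f b - f a) 0 :=
    csSup_le (nonempty_posSums f ha) hstep
  unfold posVar
  linarith


variable {U : Type*} [MeasurableSpace U]

lemma integrable_ind_le (μ : Measure U) [IsProbabilityMeasure μ]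
    {k H : U → ℝ} (hk : Measurable k) (hkb : ∀ u, |k u| ≤ 1) (hH : Measurable H) (v : ℝ) :
    Integrable (fun u => k u * (if H u ≤ v then 1 else 0)) μ := by
  refine Integrable.mono' (integrable_const 1)
    ((hk.mul ((measurable_const.ite (measurableSet_le hH measurable_const)
      measurable_const))).aestronglyMeasurable) ?_
  filter_upwards with u
  rw [Real.norm_eq_abs, abs_mul]
  have h2 : |if H u ≤ v then (1:ℝ) else 0| ≤ 1 := by split <;> simp
  calc |k u| * |if H u ≤ v then (1:ℝ) else 0| ≤ 1 * 1 :=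
    mul_le_mul (hkb u) h2 (abs_nonneg _) zero_le_one
  _ = 1 := by ring

lemma integrable_ind_lt (μ : Measure U) [IsProbabilityMeasure μ]
    {k H : U → ℝ} (hk : Measurable k) (hkb : ∀ u, |k u| ≤ 1) (hH : Measurable H) (v : ℝ) :
    Integrable (fun u => k u * (if H u < v then 1 else 0)) μ := by
  refine Integrable.mono' (integrable_const 1)
    ((hk.mul ((measurable_const.ite (measurableSet_lt hH measurable_const)
      measurable_const))).aestronglyMeasurable) ?_
  filter_upwards with u
  rw [Real.norm_eq_abs, abs_mul]
  have h2 : |if H u < v then (1:ℝ) else 0| ≤ 1 := by split <;> simp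
  calc |k u| * |if H u < v then (1:ℝ) else 0| ≤ 1 * 1 :=
    mul_le_mul (hkb u) h2 (abs_nonneg _) zero_le_one
  _ = 1 := by ring

lemma strict_threshold_bound (μ : Measure U) [IsProbabilityMeasure μ]
    (k H : U → ℝ) (hk : Measurable k) (hkb : ∀ u, |k u| ≤ 1)
    (hH : Measurable H) (hHr : ∀ u, H u ∈ Icc (0:ℝ) 1) (ε' : ℝ)
    (hT : ∀ w ∈ Icc (0:ℝ) 1, |∫ u, k u * (if H u ≤ w then 1 else 0) ∂μ| ≤ ε') :
    ∀ w ∈ Icc (0:ℝ) 1, |∫ u, k u * (if H u < w then 1 else 0) ∂μ| ≤ ε' := by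
  have hε' : 0 ≤ ε' := le_trans (abs_nonneg _) (hT 1 ⟨zero_le_one, le_rfl⟩)
  intro w hw
  rcases eq_or_lt_of_le hw.1 with h0 | h0
  · have hz : (fun u => k u * (if H u < w then (1:ℝ) else 0)) = fun _ => (0:ℝ) := by
      funext u
      rw [if_neg (not_lt.2 (h0 ▸ (hHr u).1))]
      ring
    rw [hz, integral_zero]
    simpa using hε'
  · -- 0 < w
    set v : ℕ → ℝ := fun n => w - w / (n + 1) with hv
    have hv0 : ∀ n, v n ∈ Icc (0:ℝ) 1 := by
      intro n
      have h1 : 0 < (n:ℝ) + 1 := by positivity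
      constructor
      · simp only [hv]
        rw [sub_nonneg, div_le_iff₀ h1]
        nlinarith
      · have : w / ((n:ℝ) + 1) ≥ 0 := by positivity
        simp only [hv]; linarith [hw.2]
    have hvlt : ∀ n, v n < w := by
      intro n
      have h1 : 0 < (n:ℝ) + 1 := by positivity
      have : 0 < w / ((n:ℝ) + 1) := by positivity
      simp only [hv]; linarith
    have hvt : Tendsto v atTop (nhds w) := by
      have h1 : Tendsto (fun n : ℕ => w / (n + 1)) atTop (nhds 0) := by
        have := (tendsto_one_div_add_atTop_nhds_zero_nat).const_mul w
        simpa [div_eq_mul_inv, one_div] using this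
      have := tendsto_const_nhds (x := w) (f := atTop (α := ℕ))
      simpa using this.sub h1
    have hlim : ∀ u, Tendsto (fun n => k u * (if H u ≤ v n then 1 else 0)) atTop
        (nhds (k u * (if H u < w then 1 else 0))) := by
      intro u
      by_cases hu : H u < w
      · rw [if_pos hu]
        have hev : ∀ᶠ n in atTop, k u * (if H u ≤ v n then 1 else 0) = k u * 1 := by
          filter_upwards [hvt.eventually (eventually_gt_nhds hu)] with n hn
          rw [if_pos hn.le]
        exact Tendsto.congr' (hev.mono fun n hn => hn.symm) tendsto_const_nhds
      · rw [if_neg hu]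
        have hev : ∀ n, k u * (if H u ≤ v n then 1 else 0) = k u * 0 := by
          intro n
          rw [if_neg (by push_neg at hu; exact not_le.2 (lt_of_lt_of_le (hvlt n) hu))]
        simp only [hev]
        exact tendsto_const_nhds
    have htend : Tendsto (fun n => ∫ u, k u * (if H u ≤ v n then 1 else 0) ∂μ) atTop
        (nhds (∫ u, k u * (if H u < w then 1 else 0) ∂μ)) := by
      refine tendsto_integral_of_dominated_convergence (fun _ => (1:ℝ))
        (fun n => ((hk.mul ((measurable_const.ite (measurableSet_le hH measurable_const)
          measurable_const))).aestronglyMeasurable)) (integrable_const 1) ?_ ?_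
      · intro n
        filter_upwards with u
        rw [Real.norm_eq_abs, abs_mul]
        have h2 : |if H u ≤ v n then (1:ℝ) else 0| ≤ 1 := by split <;> simp
        calc |k u| * |if H u ≤ v n then (1:ℝ) else 0| ≤ 1 * 1 :=
          mul_le_mul (hkb u) h2 (abs_nonneg _) zero_le_one
        _ = 1 := by ring
      · filter_upwards with u
        exact hlim u
    exact le_of_tendsto htend.abs (Eventually.of_forall fun n => hT (v n) (hv0 n))


lemma core (μ : Measure U) [IsProbabilityMeasure μ]
    (k H : U → ℝ) (hk : Measurable k) (hkb : ∀ u, |k u| ≤ 1)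
    (hH : Measurable H) (hHr : ∀ u, H u ∈ Icc (0:ℝ) 1) (ε' : ℝ)
    (hT : ∀ w ∈ Icc (0:ℝ) 1, |∫ u, k u * (if H u ≤ w then 1 else 0) ∂μ| ≤ ε')
    (hT' : ∀ w ∈ Icc (0:ℝ) 1, |∫ u, k u * (if H u < w then 1 else 0) ∂μ| ≤ ε')
    (hIle : ∀ v : ℝ, Integrable (fun u => k u * (if H u ≤ v then 1 else 0)) μ)
    (hIlt : ∀ v : ℝ, Integrable (fun u => k u * (if H u < v then 1 else 0)) μ)
    (A : ℝ → ℝ) (hA : Monotone A) (hA0 : A 0 = 0) :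
    |∫ u, k u * A (H u) ∂μ| ≤ 2 * A 1 * ε' := by
  classical
  have hε' : 0 ≤ ε' := le_trans (abs_nonneg _) (hT 1 ⟨zero_le_one, le_rfl⟩)
  have hA1 : 0 ≤ A 1 := hA0 ▸ hA zero_le_one
  have hIA : Integrable (fun u => k u * A (H u)) μ := by
    refine Integrable.mono' (integrable_const (A 1))
      ((hk.mul ((hA.measurable).comp hH)).aestronglyMeasurable) ?_
    filter_upwards with u
    rw [Real.norm_eq_abs, abs_mul]
    have h1 : 0 ≤ A (H u) := hA0 ▸ hA (hHr u).1
    have h2 : A (H u) ≤ A 1 := hA (hHr u).2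
    rw [abs_of_nonneg h1]
    calc |k u| * A (H u) ≤ 1 * A 1 := mul_le_mul (hkb u) h2 h1 zero_le_one
    _ = A 1 := by ring
  refine le_of_forall_pos_le_add ?_
  intro δ hδ
  set m : ℕ := ⌈A 1 / δ⌉₊ + 1 with hm
  have hmδ : A 1 ≤ m * δ := by
    have h1 : A 1 / δ ≤ (⌈A 1 / δ⌉₊ : ℝ) := Nat.le_ceil _
    have h2 : (⌈A 1 / δ⌉₊ : ℝ) ≤ m := by rw [hm]; push_cast; linarith
    calc A 1 = (A 1 / δ) * δ := by field_simp
    _ ≤ (m : ℝ) * δ := by nlinarith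
  set Sj : ℕ → Set ℝ := fun j => {q | q ∈ Icc (0:ℝ) 1 ∧ A q ≤ j * δ} with hSj
  set w : ℕ → ℝ := fun j => sSup (Sj j) with hwdef
  have hSne : ∀ j, (Sj j).Nonempty := by
    intro j
    refine ⟨0, ⟨le_rfl, zero_le_one⟩, ?_⟩
    rw [hA0]; positivity
  have hSbdd : ∀ j, BddAbove (Sj j) := fun j => ⟨1, fun q hq => hq.1.2⟩
  have hw0 : ∀ j, 0 ≤ w j := fun j => le_csSup (hSbdd j) ⟨⟨le_rfl, zero_le_one⟩, by rw [hA0]; positivity⟩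
  have hw1 : ∀ j, w j ≤ 1 := fun j => csSup_le (hSne j) (fun q hq => hq.1.2)
  have hwIcc : ∀ j, w j ∈ Icc (0:ℝ) 1 := fun j => ⟨hw0 j, hw1 j⟩
  have hwmono : Monotone w := by
    refine monotone_nat_of_le_succ fun j => csSup_le_csSup (hSbdd _) (hSne _) ?_
    intro q hq
    refine ⟨hq.1, le_trans hq.2 ?_⟩
    have : (j:ℝ) ≤ (j:ℝ) + 1 := by linarith
    push_cast
    nlinarith [hδ.le]
  have hwm : w m = 1 := le_antisymm (hw1 m) (le_csSup (hSbdd m) ⟨⟨zero_le_one, le_rfl⟩, hmδ⟩)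
  have hα : ∀ j q, q ∈ Icc (0:ℝ) 1 → w j < q → (j:ℝ) * δ < A q := by
    intro j q hq hlt
    by_contra hc
    push_neg at hc
    exact absurd (le_csSup (hSbdd j) ⟨hq, hc⟩) (not_le.2 hlt)
  have hβ : ∀ j q, q < w j → A q ≤ (j:ℝ) * δ := by
    intro j q hlt
    obtain ⟨q', hq', hlt'⟩ := exists_lt_of_lt_csSup (hSne j) hlt
    exact le_trans (hA hlt'.le) hq'.2
  set mid : ℕ → ℝ := fun j => (w j + w (j+1)) / 2 with hmid
  have hmidIcc : ∀ j, mid j ∈ Icc (0:ℝ) 1 := by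
    intro j
    constructor
    · simp only [hmid]; linarith [hw0 j, hw0 (j+1)]
    · simp only [hmid]; linarith [hw1 j, hw1 (j+1)]
  set T : ℝ → ℝ := fun v => ∫ u, k u * (if H u ≤ v then 1 else 0) ∂μ with hTdef
  set T' : ℝ → ℝ := fun v => ∫ u, k u * (if H u < v then 1 else 0) ∂μ with hT'def
  set s : ℝ → ℝ := fun q =>
    (∑ j ∈ Finset.range m, A (mid j) * ((if q < w (j+1) then (1:ℝ) else 0) - (if q ≤ w j then 1 else 0))) +
    ∑ j ∈ Finset.range (m+1), A (w j) * ((if q ≤ w j then (1:ℝ) else 0) - (if q < w j then 1 else 0)) with hsdef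
  -- pointwise approximation
  have hs : ∀ q ∈ Icc (0:ℝ) 1, |A q - s q| ≤ δ := by
    intro q hq
    by_cases hqW : ∃ jj, jj ≤ m ∧ w jj = q
    · -- q is one of the w's
      set j₀ := Nat.find (p := fun jj => jj ≤ m ∧ w jj = q) hqW with hj₀def
      obtain ⟨hj₀m, hj₀⟩ := Nat.find_spec hqW
      set j₁ := Nat.findGreatest (fun j => w j = q) m with hj₁def
      have hj₁ : w j₁ = q := by
        obtain ⟨jj, hjjm, hjj⟩ := hqW
        exact Nat.findGreatest_spec (P := fun j => w j = q) hjjm hjj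
      have hj₁m : j₁ ≤ m := Nat.findGreatest_le m
      have hj₀₁ : j₀ ≤ j₁ := Nat.le_findGreatest hj₀m hj₀
      have hsq : ∀ j, j₀ ≤ j → j ≤ j₁ → w j = q := by
        intro j h1 h2
        have ha : w j₀ ≤ w j := hwmono h1
        have hb : w j ≤ w j₁ := hwmono h2
        rw [hj₀] at ha; rw [hj₁] at hb; linarith
      have hiffle : ∀ j, j ≤ m → ((q ≤ w j) ↔ j₀ ≤ j) := by
        intro j hj
        constructor
        · intro hle
          by_contra hc
          push_neg at hc
          have h1 : w j ≤ w j₀ := hwmono hc.le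
          rw [hj₀] at h1
          have : w j = q := le_antisymm h1 hle
          exact Nat.find_min hqW hc ⟨by omega, this⟩
        · intro hge
          calc q = w j₀ := hj₀.symm
          _ ≤ w j := hwmono hge
      have hifflt : ∀ j, j ≤ m → ((q < w j) ↔ j₁ < j) := by
        intro j hj
        constructor
        · intro hlt
          by_contra hc
          push_neg at hc
          have h1 : w j ≤ w j₁ := hwmono hc
          rw [hj₁] at h1
          linarith
        · intro hgt
          have h1 : q ≤ w j := by rw [← hj₁]; exact hwmono hgt.le
          rcases eq_or_lt_of_le h1 with he | hlt
          · exact absurd he.symm (Nat.findGreatest_is_greatest hgt hj)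
          · exact hlt
      have hS1 : (∑ j ∈ Finset.range m, A (mid j) * ((if q < w (j+1) then (1:ℝ) else 0) - (if q ≤ w j then 1 else 0)))
          = ∑ j ∈ Finset.range m, (if j₀ ≤ j ∧ j < j₁ then -A q else 0) := by
        refine Finset.sum_congr rfl fun j hj => ?_
        rw [Finset.mem_range] at hj
        rw [if_congr (hifflt (j+1) (by omega)) rfl rfl, if_congr (hiffle j (by omega)) rfl rfl]
        by_cases c1 : j₀ ≤ j
        · by_cases c2 : j < j₁
          · rw [if_neg (by omega), if_pos c1, if_pos ⟨c1, c2⟩]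
            have hmj : mid j = q := by
              have ha : w j = q := hsq j c1 (by omega)
              have hb : w (j+1) = q := hsq (j+1) (by omega) (by omega)
              simp only [hmid]; rw [ha, hb]; ring
            rw [hmj]; ring
          · rw [if_pos (by omega), if_pos c1, if_neg (by omega)]; ring
        · rw [if_neg (by omega), if_neg c1, if_neg (by omega)]; ring
      have hS2 : (∑ j ∈ Finset.range (m+1), A (w j) * ((if q ≤ w j then (1:ℝ) else 0) - (if q < w j then 1 else 0)))
          = ∑ j ∈ Finset.range (m+1), (if j₀ ≤ j ∧ j ≤ j₁ then A q else 0) := by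
        refine Finset.sum_congr rfl fun j hj => ?_
        rw [Finset.mem_range] at hj
        rw [if_congr (hiffle j (by omega)) rfl rfl, if_congr (hifflt j (by omega)) rfl rfl]
        by_cases c1 : j₀ ≤ j
        · by_cases c2 : j ≤ j₁
          · rw [if_pos c1, if_neg (by omega), if_pos ⟨c1, c2⟩, hsq j c1 c2]; ring
          · rw [if_pos c1, if_pos (by omega), if_neg (by omega)]; ring
        · rw [if_neg c1, if_neg (by omega), if_neg (by omega)]; ring
      have hc1 : ∑ j ∈ Finset.range m, (if j₀ ≤ j ∧ j < j₁ then -A q else 0)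
          = ((j₁ - j₀ : ℕ) : ℝ) * (-A q) := by
        rw [← Finset.sum_filter]
        have hfe : (Finset.range m).filter (fun j => j₀ ≤ j ∧ j < j₁) = Finset.Ico j₀ j₁ := by
          ext j
          simp only [Finset.mem_filter, Finset.mem_range, Finset.mem_Ico]
          omega
        rw [hfe, Finset.sum_const, Nat.card_Ico, nsmul_eq_mul]
      have hc2 : ∑ j ∈ Finset.range (m+1), (if j₀ ≤ j ∧ j ≤ j₁ then A q else 0)
          = ((j₁ + 1 - j₀ : ℕ) : ℝ) * A q := by
        rw [← Finset.sum_filter]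
        have hfe : (Finset.range (m+1)).filter (fun j => j₀ ≤ j ∧ j ≤ j₁) = Finset.Icc j₀ j₁ := by
          ext j
          simp only [Finset.mem_filter, Finset.mem_range, Finset.mem_Icc]
          omega
        rw [hfe, Finset.sum_const, Nat.card_Icc, nsmul_eq_mul]
      have hsq2 : s q = A q := by
        simp only [hsdef]
        rw [hS1, hS2, hc1, hc2]
        rw [Nat.cast_sub hj₀₁, Nat.cast_sub (by omega)]
        push_cast
        ring
      rw [hsq2]
      simpa using hδ.le
    · -- q is not one of the w's
      push_neg at hqW
      by_cases hq0 : q < w 0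
      · have hAq : A q = 0 := by
          have h1 := hβ 0 q hq0
          have h2 : (0:ℝ) ≤ A q := hA0 ▸ hA hq.1
          push_cast at h1
          linarith
        have hs0 : s q = 0 := by
          simp only [hsdef]
          rw [Finset.sum_eq_zero, Finset.sum_eq_zero]
          · ring
          · intro j hj
            rw [if_pos (lt_of_lt_of_le hq0 (hwmono (Nat.zero_le j))).le,
              if_pos (lt_of_lt_of_le hq0 (hwmono (Nat.zero_le j)))]
            ring
          · intro j hj
            rw [if_pos (lt_of_lt_of_le hq0 (hwmono (Nat.zero_le (j+1)))),
              if_pos (lt_of_lt_of_le hq0 (hwmono (Nat.zero_le j))).le]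
            ring
        rw [hAq, hs0]
        simpa using hδ.le
      · have hw0q : w 0 < q := lt_of_le_of_ne (not_lt.1 hq0) (hqW 0 (Nat.zero_le m))
        set j' := Nat.findGreatest (fun j => w j < q) m with hj'def
        have hj'P : w j' < q := Nat.findGreatest_spec (P := fun j => w j < q) (Nat.zero_le m) hw0q
        have hj'm : j' ≤ m := Nat.findGreatest_le m
        have hj'lt : j' < m := by
          rcases eq_or_lt_of_le hj'm with he | hlt
          · exfalso
            rw [he, hwm] at hj'P
            linarith [hq.2]
          · exact hlt
        have hiffle2 : ∀ j, j ≤ m → ((q ≤ w j) ↔ j' < j) := by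
          intro j hj
          constructor
          · intro hle
            by_contra hc
            push_neg at hc
            have h1 : w j ≤ w j' := hwmono hc
            linarith
          · intro hgt
            have := Nat.findGreatest_is_greatest hgt hj
            push_neg at this
            exact this
        have hifflt2 : ∀ j, j ≤ m → ((q < w j) ↔ j' < j) := by
          intro j hj
          rw [← hiffle2 j hj]
          constructor
          · exact le_of_lt
          · intro hle
            exact lt_of_le_of_ne hle (Ne.symm (hqW j hj))
        have hS2 : (∑ j ∈ Finset.range (m+1), A (w j) * ((if q ≤ w j then (1:ℝ) else 0) - (if q < w j then 1 else 0))) = 0 := by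
          refine Finset.sum_eq_zero fun j hj => ?_
          rw [Finset.mem_range] at hj
          rw [if_congr (hiffle2 j (by omega)) rfl rfl, if_congr (hifflt2 j (by omega)) rfl rfl]
          ring
        have hS1 : (∑ j ∈ Finset.range m, A (mid j) * ((if q < w (j+1) then (1:ℝ) else 0) - (if q ≤ w j then 1 else 0)))
            = A (mid j') := by
          have he : ∀ j ∈ Finset.range m, A (mid j) * ((if q < w (j+1) then (1:ℝ) else 0) - (if q ≤ w j then 1 else 0))
              = if j = j' then A (mid j) else 0 := by
            intro j hj
            rw [Finset.mem_range] at hj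
            rw [if_congr (hifflt2 (j+1) (by omega)) rfl rfl, if_congr (hiffle2 j (by omega)) rfl rfl]
            by_cases c1 : j = j'
            · subst c1
              rw [if_pos (by omega), if_neg (by omega), if_pos rfl]
              ring
            · rcases Nat.lt_or_ge j j' with hc | hc
              · rw [if_neg (by omega), if_neg (by omega), if_neg c1]; ring
              · rw [if_pos (by omega), if_pos (by omega), if_neg c1]; ring
          rw [Finset.sum_congr rfl he, Finset.sum_ite_eq' (Finset.range m) j' (fun j => A (mid j)),
            if_pos (Finset.mem_range.2 hj'lt)]
        have hsq2 : s q = A (mid j') := by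
          simp only [hsdef]; rw [hS1, hS2]; ring
        have hq1 : q < w (j'+1) := (hifflt2 (j'+1) (by omega)).2 (by omega)
        have hmid1 : w j' < mid j' := by
          simp only [hmid]
          have : w j' < w (j'+1) := lt_trans hj'P hq1
          linarith
        have hmid2 : mid j' < w (j'+1) := by
          simp only [hmid]
          have : w j' < w (j'+1) := lt_trans hj'P hq1
          linarith
        have h3 : (j':ℝ) * δ < A q := hα j' q hq hj'P
        have h4 : A q ≤ ((j':ℝ) + 1) * δ := by
          have := hβ (j'+1) q hq1
          push_cast at this
          linarith
        have h5 : (j':ℝ) * δ < A (mid j') := hα j' _ (hmidIcc j') hmid1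
        have h6 : A (mid j') ≤ ((j':ℝ) + 1) * δ := by
          have := hβ (j'+1) _ hmid2
          push_cast at this
          linarith
        rw [hsq2, abs_le]
        constructor <;> linarith
  -- integral of s equals the Abel sum
  have hexp : (fun u => k u * s (H u)) =
      fun u => (∑ j ∈ Finset.range m, (A (mid j) * (k u * (if H u < w (j+1) then 1 else 0)) - A (mid j) * (k u * (if H u ≤ w j then 1 else 0)))) +
        ∑ j ∈ Finset.range (m+1), (A (w j) * (k u * (if H u ≤ w j then 1 else 0)) - A (w j) * (k u * (if H u < w j then 1 else 0))) := by
    funext u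
    simp only [hsdef, mul_add, Finset.mul_sum]
    congr 1 <;> exact Finset.sum_congr rfl fun j _ => by ring
  have hterm1 : ∀ j : ℕ, Integrable (fun u => A (mid j) * (k u * (if H u < w (j+1) then 1 else 0)) - A (mid j) * (k u * (if H u ≤ w j then 1 else 0))) μ :=
    fun j => (((hIlt (w (j+1))).const_mul _).sub ((hIle (w j)).const_mul _))
  have hterm2 : ∀ j : ℕ, Integrable (fun u => A (w j) * (k u * (if H u ≤ w j then 1 else 0)) - A (w j) * (k u * (if H u < w j then 1 else 0))) μ :=
    fun j => (((hIle (w j)).const_mul _).sub ((hIlt (w j)).const_mul _))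
  have hIs : Integrable (fun u => k u * s (H u)) μ := by
    rw [hexp]
    exact (integrable_finset_sum _ (fun j _ => hterm1 j)).add (integrable_finset_sum _ (fun j _ => hterm2 j))
  have hIsum : ∫ u, k u * s (H u) ∂μ =
      (∑ j ∈ Finset.range m, (A (mid j) * T' (w (j+1)) - A (mid j) * T (w j))) +
        ∑ j ∈ Finset.range (m+1), (A (w j) * T (w j) - A (w j) * T' (w j)) := by
    rw [hexp, integral_add (integrable_finset_sum _ (fun j _ => hterm1 j)) (integrable_finset_sum _ (fun j _ => hterm2 j)),
      integral_finset_sum _ (fun j _ => hterm1 j), integral_finset_sum _ (fun j _ => hterm2 j)]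
    congr 1
    · refine Finset.sum_congr rfl fun j _ => ?_
      rw [integral_sub ((hIlt (w (j+1))).const_mul _) ((hIle (w j)).const_mul _),
        integral_const_mul, integral_const_mul]
    · refine Finset.sum_congr rfl fun j _ => ?_
      rw [integral_sub ((hIle (w j)).const_mul _) ((hIlt (w j)).const_mul _),
        integral_const_mul, integral_const_mul]
  -- Abel rearrangement bound
  have habel : |(∑ j ∈ Finset.range m, (A (mid j) * T' (w (j+1)) - A (mid j) * T (w j))) +
      ∑ j ∈ Finset.range (m+1), (A (w j) * T (w j) - A (w j) * T' (w j))| ≤ 2 * A 1 * ε' := by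
    have hTb : ∀ j, |T (w j)| ≤ ε' := fun j => hT (w j) (hwIcc j)
    have hT'b : ∀ j, |T' (w j)| ≤ ε' := fun j => hT' (w j) (hwIcc j)
    have e1 : ∑ j ∈ Finset.range (m+1), A (w j) * T' (w j)
        = (∑ j ∈ Finset.range m, A (w (j+1)) * T' (w (j+1))) + A (w 0) * T' (w 0) :=
      Finset.sum_range_succ' (fun j => A (w j) * T' (w j)) m
    have e2 : ∑ j ∈ Finset.range (m+1), A (w j) * T (w j)
        = (∑ j ∈ Finset.range m, A (w j) * T (w j)) + A (w m) * T (w m) :=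
      Finset.sum_range_succ (fun j => A (w j) * T (w j)) m
    have estep : (∑ j ∈ Finset.range m, (A (mid j) * T' (w (j+1)) - A (mid j) * T (w j))) +
        ∑ j ∈ Finset.range (m+1), (A (w j) * T (w j) - A (w j) * T' (w j))
        = (∑ j ∈ Finset.range m, ((A (mid j) - A (w (j+1))) * T' (w (j+1)) + (A (w j) - A (mid j)) * T (w j)))
          + (A (w m) * T (w m) - A (w 0) * T' (w 0)) := by
      rw [Finset.sum_sub_distrib, Finset.sum_sub_distrib, e1, e2]
      have e3 : ∑ j ∈ Finset.range m, ((A (mid j) - A (w (j+1))) * T' (w (j+1)) + (A (w j) - A (mid j)) * T (w j))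
          = (∑ j ∈ Finset.range m, A (mid j) * T' (w (j+1))) - (∑ j ∈ Finset.range m, A (w (j+1)) * T' (w (j+1)))
            + ((∑ j ∈ Finset.range m, A (w j) * T (w j)) - ∑ j ∈ Finset.range m, A (mid j) * T (w j)) := by
        rw [← Finset.sum_sub_distrib, ← Finset.sum_sub_distrib, ← Finset.sum_add_distrib]
        exact Finset.sum_congr rfl fun j _ => by ring
      rw [e3]; ring
    rw [estep]
    have hbd1 : ∀ j ∈ Finset.range m, |(A (mid j) - A (w (j+1))) * T' (w (j+1)) + (A (w j) - A (mid j)) * T (w j)|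
        ≤ ((A (w (j+1)) - A (mid j)) + (A (mid j) - A (w j))) * ε' := by
      intro j _
      have hmw1 : w j ≤ mid j := by
        simp only [hmid]
        have := hwmono (Nat.le_succ j)
        linarith
      have hmw2 : mid j ≤ w (j+1) := by
        simp only [hmid]
        have := hwmono (Nat.le_succ j)
        linarith
      have hA12 : A (mid j) ≤ A (w (j+1)) := hA hmw2
      have hA11 : A (w j) ≤ A (mid j) := hA hmw1
      calc |(A (mid j) - A (w (j+1))) * T' (w (j+1)) + (A (w j) - A (mid j)) * T (w j)|
          ≤ |(A (mid j) - A (w (j+1))) * T' (w (j+1))| + |(A (w j) - A (mid j)) * T (w j)| := abs_add_le _ _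
        _ = |A (mid j) - A (w (j+1))| * |T' (w (j+1))| + |A (w j) - A (mid j)| * |T (w j)| := by
            rw [abs_mul, abs_mul]
        _ ≤ |A (mid j) - A (w (j+1))| * ε' + |A (w j) - A (mid j)| * ε' := by
            gcongr
            · exact hT'b (j+1)
            · exact hTb j
        _ = ((A (w (j+1)) - A (mid j)) + (A (mid j) - A (w j))) * ε' := by
            rw [abs_of_nonpos (by linarith), abs_of_nonpos (by linarith)]
            ring
    have htel : ∑ j ∈ Finset.range m, ((A (w (j+1)) - A (mid j)) + (A (mid j) - A (w j))) * ε'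
        = (A (w m) - A (w 0)) * ε' := by
      rw [← Finset.sum_mul]
      congr 1
      have : ∀ j, (A (w (j+1)) - A (mid j)) + (A (mid j) - A (w j)) = A (w (j+1)) - A (w j) := fun j => by ring
      rw [Finset.sum_congr rfl fun j _ => this j]
      exact Finset.sum_range_sub (fun j => A (w j)) m
    have hAw0 : 0 ≤ A (w 0) := hA0 ▸ hA (hw0 0)
    have hAwm : A (w m) = A 1 := by rw [hwm]
    calc |(∑ j ∈ Finset.range m, ((A (mid j) - A (w (j+1))) * T' (w (j+1)) + (A (w j) - A (mid j)) * T (w j)))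
          + (A (w m) * T (w m) - A (w 0) * T' (w 0))|
        ≤ |∑ j ∈ Finset.range m, ((A (mid j) - A (w (j+1))) * T' (w (j+1)) + (A (w j) - A (mid j)) * T (w j))|
          + (|A (w m) * T (w m)| + |A (w 0) * T' (w 0)|) := by
          refine le_trans (abs_add_le _ _) ?_
          gcongr
          exact abs_sub _ _
      _ ≤ (∑ j ∈ Finset.range m, ((A (w (j+1)) - A (mid j)) + (A (mid j) - A (w j))) * ε')
          + (A (w m) * ε' + A (w 0) * ε') := by
          gcongr
          · exact le_trans (Finset.abs_sum_le_sum_abs _ _) (Finset.sum_le_sum hbd1)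
          · rw [abs_mul, abs_of_nonneg (hAwm ▸ hA1)]
            exact mul_le_mul_of_nonneg_left (hTb m) (hAwm ▸ hA1)
          · rw [abs_mul, abs_of_nonneg hAw0]
            exact mul_le_mul_of_nonneg_left (hT'b 0) hAw0
      _ = (A (w m) - A (w 0)) * ε' + (A (w m) * ε' + A (w 0) * ε') := by rw [htel]
      _ = 2 * A (w m) * ε' := by ring
      _ = 2 * A 1 * ε' := by rw [hAwm]
  -- error bound
  have herr : |∫ u, k u * A (H u) ∂μ - ∫ u, k u * s (H u) ∂μ| ≤ δ := by
    rw [← integral_sub hIA hIs]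
    have hpt : ∀ u, ‖k u * A (H u) - k u * s (H u)‖ ≤ δ := by
      intro u
      rw [← mul_sub, Real.norm_eq_abs, abs_mul]
      calc |k u| * |A (H u) - s (H u)| ≤ 1 * δ :=
        mul_le_mul (hkb u) (hs (H u) (hHr u)) (abs_nonneg _) zero_le_one
      _ = δ := by ring
    calc |∫ u, (k u * A (H u) - k u * s (H u)) ∂μ| ≤ δ * (μ univ).toReal :=
      norm_integral_le_of_norm_le_const (Eventually.of_forall hpt)
    _ = δ := by simp
  calc |∫ u, k u * A (H u) ∂μ|
      ≤ |∫ u, k u * A (H u) ∂μ - ∫ u, k u * s (H u) ∂μ| + |∫ u, k u * s (H u) ∂μ| := by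
        have := abs_add_le (∫ u, k u * A (H u) ∂μ - ∫ u, k u * s (H u) ∂μ) (∫ u, k u * s (H u) ∂μ)
        simpa using this
    _ ≤ δ + 2 * A 1 * ε' := by
        refine add_le_add herr ?_
        rw [hIsum]
        exact habel
    _ = 2 * A 1 * ε' + δ := by ring


-- per-loss lemma
lemma one_loss (μ : Measure U) [IsProbabilityMeasure μ]
    (k H : U → ℝ) (hk : Measurable k) (hkb : ∀ u, |k u| ≤ 1)
    (hH : Measurable H) (hHr : ∀ u, H u ∈ Icc (0:ℝ) 1) (ε' : ℝ)
    (hT : ∀ w ∈ Icc (0:ℝ) 1, |∫ u, k u * (if H u ≤ w then 1 else 0) ∂μ| ≤ ε')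
    (hT' : ∀ w ∈ Icc (0:ℝ) 1, |∫ u, k u * (if H u < w then 1 else 0) ∂μ| ≤ ε')
    (f : ℝ → ℝ) (hfm : Measurable f) (hfb : ∀ q ∈ Icc (0:ℝ) 1, |f q| ≤ 1)
    (hV : ∀ S ∈ partitionSums f, S ≤ 1) :
    |∫ u, k u * f (H u) ∂μ| ≤ 3 * ε' := by
  classical
  have hε' : 0 ≤ ε' := le_trans (abs_nonneg _) (hT 1 ⟨zero_le_one, le_rfl⟩)
  set clamp : ℝ → ℝ := fun t => max 0 (min t 1) with hclampdef
  have hclamp_mono : Monotone clamp := by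
    intro a b hab
    exact max_le_max le_rfl (min_le_min hab le_rfl)
  have hclamp_mem : ∀ t, clamp t ∈ Icc (0:ℝ) 1 := by
    intro t
    constructor
    · exact le_max_left 0 _
    · simp only [hclampdef]
      rw [max_le_iff]
      exact ⟨zero_le_one, min_le_right _ _⟩
  have hclamp_id : ∀ t ∈ Icc (0:ℝ) 1, clamp t = t := by
    intro t ht
    simp only [hclampdef]
    rw [min_eq_left ht.2, max_eq_right ht.1]
  have hclamp0 : clamp 0 = 0 := hclamp_id 0 ⟨le_rfl, zero_le_one⟩
  have hclamp1 : clamp 1 = 1 := hclamp_id 1 ⟨zero_le_one, le_rfl⟩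
  set P : ℝ → ℝ := fun t => posVar f (clamp t) with hPdef
  set N : ℝ → ℝ := fun t => P t - (f (clamp t) - f 0) with hNdef
  have hPstep : ∀ a b : ℝ, a ≤ b → P a + max (f (clamp b) - f (clamp a)) 0 ≤ P b := by
    intro a b hab
    rcases eq_or_lt_of_le (hclamp_mono hab) with he | hlt
    · have hPe : P a = P b := by simp only [hPdef]; rw [he]
      rw [he, hPe]; simp
    · exact posVar_step hV (hclamp_mem a).1 hlt (hclamp_mem b).2
  have hPmono : Monotone P := by
    intro a b hab
    have := hPstep a b hab
    have h2 : 0 ≤ max (f (clamp b) - f (clamp a)) 0 := le_max_right _ _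
    linarith
  have hNmono : Monotone N := by
    intro a b hab
    have := hPstep a b hab
    have h2 : f (clamp b) - f (clamp a) ≤ max (f (clamp b) - f (clamp a)) 0 := le_max_left _ _
    simp only [hNdef]
    linarith
  have hP0 : P 0 = 0 := by simp only [hPdef]; rw [hclamp0, posVar_zero]
  have hN0 : N 0 = 0 := by simp only [hNdef]; rw [hP0, hclamp0]; ring
  have hP1 : P 1 ≤ (1 + (f 1 - f 0)) / 2 := by
    simp only [hPdef]; rw [hclamp1]
    exact posVar_le hV ⟨zero_le_one, le_rfl⟩
  have hN1 : N 1 = P 1 - (f 1 - f 0) := by simp only [hNdef]; rw [hclamp1]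
  have hPN1 : P 1 + N 1 ≤ 1 := by rw [hN1]; linarith
  have hcoreP := core μ k H hk hkb hH hHr ε' hT hT'
    (integrable_ind_le μ hk hkb hH) (integrable_ind_lt μ hk hkb hH) P hPmono hP0
  have hcoreN := core μ k H hk hkb hH hHr ε' hT hT'
    (integrable_ind_le μ hk hkb hH) (integrable_ind_lt μ hk hkb hH) N hNmono hN0
  -- integrabilities
  have hIk : Integrable k μ := by
    refine Integrable.mono' (integrable_const 1) hk.aestronglyMeasurable ?_
    filter_upwards with u
    rw [Real.norm_eq_abs]; exact hkb u
  have hIP : Integrable (fun u => k u * P (H u)) μ := by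
    refine Integrable.mono' (integrable_const (P 1))
      ((hk.mul ((hPmono.measurable).comp hH)).aestronglyMeasurable) ?_
    filter_upwards with u
    rw [Real.norm_eq_abs, abs_mul]
    have h1 : 0 ≤ P (H u) := hP0 ▸ hPmono (hHr u).1
    have h2 : P (H u) ≤ P 1 := hPmono (hHr u).2
    rw [abs_of_nonneg h1]
    calc |k u| * P (H u) ≤ 1 * P 1 := mul_le_mul (hkb u) h2 h1 zero_le_one
    _ = P 1 := by ring
  have hIN : Integrable (fun u => k u * N (H u)) μ := by
    refine Integrable.mono' (integrable_const (N 1))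
      ((hk.mul ((hNmono.measurable).comp hH)).aestronglyMeasurable) ?_
    filter_upwards with u
    rw [Real.norm_eq_abs, abs_mul]
    have h1 : 0 ≤ N (H u) := hN0 ▸ hNmono (hHr u).1
    have h2 : N (H u) ≤ N 1 := hNmono (hHr u).2
    rw [abs_of_nonneg h1]
    calc |k u| * N (H u) ≤ 1 * N 1 := mul_le_mul (hkb u) h2 h1 zero_le_one
    _ = N 1 := by ring
  -- decomposition
  have hdecomp : (fun u => k u * f (H u)) = fun u => (k u * f 0 + k u * P (H u)) - k u * N (H u) := by
    funext u
    have h1 : clamp (H u) = H u := hclamp_id _ (hHr u)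
    simp only [hNdef, hPdef, h1]
    ring
  have hconst : |∫ u, k u * f 0 ∂μ| ≤ ε' := by
    have he : (fun u => k u * f 0) = fun u => f 0 * (k u * (if H u ≤ 1 then 1 else 0)) := by
      funext u
      rw [if_pos (hHr u).2]
      ring
    rw [he, integral_const_mul]
    rw [abs_mul]
    calc |f 0| * |∫ u, k u * (if H u ≤ 1 then 1 else 0) ∂μ| ≤ 1 * ε' :=
      mul_le_mul (hfb 0 ⟨le_rfl, zero_le_one⟩) (hT 1 ⟨zero_le_one, le_rfl⟩) (abs_nonneg _) zero_le_one
    _ = ε' := by ring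
  have hIc : Integrable (fun u => k u * f 0) μ := hIk.mul_const (f 0)
  have hsplit : ∫ u, k u * f (H u) ∂μ =
      ((∫ u, k u * f 0 ∂μ) + ∫ u, k u * P (H u) ∂μ) - ∫ u, k u * N (H u) ∂μ := by
    have hIcP : Integrable (fun u => k u * f 0 + k u * P (H u)) μ := hIc.add hIP
    rw [hdecomp, integral_sub hIcP hIN, integral_add hIc hIP]
  rw [hsplit]
  have hPn : 0 ≤ P 1 := hP0 ▸ hPmono zero_le_one
  have hNn : 0 ≤ N 1 := hN0 ▸ hNmono zero_le_one
  calc |((∫ u, k u * f 0 ∂μ) + ∫ u, k u * P (H u) ∂μ) - ∫ u, k u * N (H u) ∂μ|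
      ≤ |(∫ u, k u * f 0 ∂μ) + ∫ u, k u * P (H u) ∂μ| + |∫ u, k u * N (H u) ∂μ| := abs_sub _ _
    _ ≤ (|∫ u, k u * f 0 ∂μ| + |∫ u, k u * P (H u) ∂μ|) + |∫ u, k u * N (H u) ∂μ| := by
        gcongr
        exact abs_add_le _ _
    _ ≤ (ε' + 2 * P 1 * ε') + 2 * N 1 * ε' :=
        add_le_add (add_le_add hconst hcoreP) hcoreN
    _ ≤ 3 * ε' := by nlinarith
end Stmt12Aux

/-- **randomized Hypothesis OI.** If a randomized predictor is randomized
`(G, H, ε)`-multiaccurate, then for every `h ∈ H` and group `g ∈ G`,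
`|E[(y - p(ω,x))·Δℓ(h(x)) | g(x)=1]| ≤ 10ε·√(1/P_g)`. -/
theorem stmt12 {Ω X : Type*} [MeasurableSpace Ω] [MeasurableSpace X]
    (π : Measure Ω) [IsProbabilityMeasure π]
    (D : Measure (X × Bool)) [IsProbabilityMeasure D]
    (ε : ℝ) (hε : 0 < ε)
    -- a bounded-variation loss
    (ℓ : ℝ → Bool → ℝ)
    (hLmeas : ∀ y : Bool, Measurable (fun q => ℓ q y))
    (hLbdd : ∀ q ∈ Icc (0:ℝ) 1, ∀ y : Bool, ℓ q y ∈ Icc (-1:ℝ) 1)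
    (hLBV : ∀ y : Bool, ∀ S ∈ partitionSums (fun q => ℓ q y), S ≤ 1)
    (G : Set (X → Bool)) (hGmeas : ∀ g ∈ G, Measurable g)
    (hGpos : ∀ g ∈ G, 0 < Pg D g)
    (H : Set (X → ℝ)) (hHmeas : ∀ h ∈ H, Measurable h)
    (hHrange : ∀ h ∈ H, ∀ x, h x ∈ Icc (0:ℝ) 1)
    (p : Ω × X → ℝ) (hpmeas : Measurable p) (hprange : ∀ u, p u ∈ Icc (0:ℝ) 1)
    -- randomized (G, H, ε)-multiaccuracy
    (hma : ∀ w ∈ Icc (0:ℝ) 1, ∀ h ∈ H, ∀ g ∈ G,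
      |condER π D g (fun u => (lab u.2.2 - p (u.1, u.2.1)) *
        (if h u.2.1 ≤ w then 1 else 0))| ≤ ε * Real.sqrt (1 / Pg D g)) :
    ∀ h ∈ H, ∀ g ∈ G,
      |condER π D g (fun u => (lab u.2.2 - p (u.1, u.2.1)) *
          (ℓ (h u.2.1) true - ℓ (h u.2.1) false))| ≤
        10 * ε * Real.sqrt (1 / Pg D g) := by
  intro h hH g hG
  classical
  have hgm : Measurable g := hGmeas g hG
  have hhm : Measurable h := hHmeas h hH
  have hPg : 0 < Pg D g := hGpos g hG
  have hDne : D {z : X × Bool | g z.1 = true} ≠ 0 := by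
    intro h0
    rw [Pg, h0] at hPg
    simp at hPg
  have hprodE : (π.prod D) {u : Ω × (X × Bool) | g u.2.1 = true} = D {z : X × Bool | g z.1 = true} := by
    have he : {u : Ω × (X × Bool) | g u.2.1 = true} = (univ : Set Ω) ×ˢ {z : X × Bool | g z.1 = true} := by
      ext u
      simp [Set.mem_prod]
    rw [he, Measure.prod_prod, measure_univ, one_mul]
  have hne : (π.prod D) {u : Ω × (X × Bool) | g u.2.1 = true} ≠ 0 := by
    rw [hprodE]; exact hDne
  haveI : IsProbabilityMeasure ((π.prod D)[|{u : Ω × (X × Bool) | g u.2.1 = true}]) :=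
    cond_isProbabilityMeasure hne
  set μ := (π.prod D)[|{u : Ω × (X × Bool) | g u.2.1 = true}] with hμdef
  set k : Ω × (X × Bool) → ℝ := fun u => lab u.2.2 - p (u.1, u.2.1) with hkdef
  set HH : Ω × (X × Bool) → ℝ := fun u => h u.2.1 with hHHdef
  have hkm : Measurable k := by
    apply Measurable.sub
    · exact (Measurable.of_discrete (f := lab)).comp (measurable_snd.comp measurable_snd)
    · exact hpmeas.comp (measurable_fst.prodMk (measurable_fst.comp measurable_snd))
  have hkb : ∀ u, |k u| ≤ 1 := by
    intro u
    have h1 := hprange (u.1, u.2.1)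
    have h2 : lab u.2.2 ∈ Icc (0:ℝ) 1 := by
      rcases u.2.2 <;> simp [lab]
    simp only [hkdef]
    rw [abs_le]
    constructor
    · linarith [h1.2, h2.1]
    · linarith [h1.1, h2.2]
  have hHm : Measurable HH := hhm.comp (measurable_fst.comp measurable_snd)
  have hHr : ∀ u, HH u ∈ Icc (0:ℝ) 1 := fun u => hHrange h hH u.2.1
  set ε' := ε * Real.sqrt (1 / Pg D g) with hε'def
  have hε'0 : 0 ≤ ε' := by positivity
  have hT : ∀ w ∈ Icc (0:ℝ) 1, |∫ u, k u * (if HH u ≤ w then 1 else 0) ∂μ| ≤ ε' := by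
    intro w hw
    exact hma w hw h hH g hG
  have hT' := Stmt12Aux.strict_threshold_bound μ k HH hkm hkb hHm hHr ε' hT
  have h1 := Stmt12Aux.one_loss μ k HH hkm hkb hHm hHr ε' hT hT'
    (fun q => ℓ q true) (hLmeas true)
    (fun q hq => abs_le.2 ⟨(hLbdd q hq true).1, (hLbdd q hq true).2⟩) (hLBV true)
  have h0 := Stmt12Aux.one_loss μ k HH hkm hkb hHm hHr ε' hT hT'
    (fun q => ℓ q false) (hLmeas false)
    (fun q hq => abs_le.2 ⟨(hLbdd q hq false).1, (hLbdd q hq false).2⟩) (hLBV false)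
  have hI1 : Integrable (fun u => k u * ℓ (HH u) true) μ := by
    refine Integrable.mono' (integrable_const 1)
      ((hkm.mul ((hLmeas true).comp hHm)).aestronglyMeasurable) ?_
    filter_upwards with u
    rw [Real.norm_eq_abs, abs_mul]
    have hb := hLbdd (HH u) (hHr u) true
    have : |ℓ (HH u) true| ≤ 1 := abs_le.2 ⟨hb.1, hb.2⟩
    calc |k u| * |ℓ (HH u) true| ≤ 1 * 1 := mul_le_mul (hkb u) this (abs_nonneg _) zero_le_one
    _ = 1 := by ring
  have hI0 : Integrable (fun u => k u * ℓ (HH u) false) μ := by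
    refine Integrable.mono' (integrable_const 1)
      ((hkm.mul ((hLmeas false).comp hHm)).aestronglyMeasurable) ?_
    filter_upwards with u
    rw [Real.norm_eq_abs, abs_mul]
    have hb := hLbdd (HH u) (hHr u) false
    have : |ℓ (HH u) false| ≤ 1 := abs_le.2 ⟨hb.1, hb.2⟩
    calc |k u| * |ℓ (HH u) false| ≤ 1 * 1 := mul_le_mul (hkb u) this (abs_nonneg _) zero_le_one
    _ = 1 := by ring
  have hsplit : condER π D g (fun u => (lab u.2.2 - p (u.1, u.2.1)) *
      (ℓ (h u.2.1) true - ℓ (h u.2.1) false)) =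
      (∫ u, k u * ℓ (HH u) true ∂μ) - ∫ u, k u * ℓ (HH u) false ∂μ := by
    rw [condER, ← integral_sub hI1 hI0]
    refine integral_congr_ae (Eventually.of_forall fun u => ?_)
    simp only [hkdef, hHHdef]
    ring
  rw [hsplit]
  calc |(∫ u, k u * ℓ (HH u) true ∂μ) - ∫ u, k u * ℓ (HH u) false ∂μ|
      ≤ |∫ u, k u * ℓ (HH u) true ∂μ| + |∫ u, k u * ℓ (HH u) false ∂μ| := abs_sub _ _
    _ ≤ 3 * ε' + 3 * ε' := add_le_add h1 h0
    _ ≤ 10 * ε * Real.sqrt (1 / Pg D g) := by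
        rw [hε'def]
        nlinarith [hε'0]
end
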